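/- Let r ∈ ℕ_0 and γ ∈ ℝ^{r+1}. If there exist d ∈ (0,1) and M > 0 such that P_γ(z) ≤ M for all z ∈ (0,d) (with d small enough that all ℓ_j(z) > 1 for 1 ≤ j ≤ r on (0,d)), then P_γ(z) converges to a real limit as z → 0+; moreover this limit equals 1 if γ = 0 and equals 0 otherwise. In particular, if c ∈ ℝ \ {0} is such that c·P_γ(z) ∈ [−1,1] for all z ∈ (0,d), then lim_{z→0+} P_γ(z) exists in ℝ. -/

import Mathlib

/-!
Since `log ℓ₀ = -ℓ₁` and `log ℓⱼ = ℓⱼ₊₁` for `j ≥ 1`, near `0⁺` we have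
`P_γ = exp (∑ⱼ cⱼ ℓⱼ₊₁)` with `c₀ = -γ₀` and `cⱼ = γⱼ` otherwise. Every `ℓⱼ₊₁` tends to `+∞`
and `ℓⱼ₊₂ = log ℓⱼ₊₁ = o(ℓⱼ₊₁)`, so if `γ ≠ 0` the exponent is asymptotic to `cₖ ℓₖ₊₁` for the
least `k` with `γₖ ≠ 0`. Hence `P_γ` tends to `0` or to `+∞`, and the upper bound excludes `+∞`.
-/

open Real Filter Topology

/-- Iterated logarithms: `ell 0 z = z`, `ell 1 z = -log z`,
`ell (j+1) z = log (ell j z)` for `j ≥ 1`. -/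
noncomputable def ell : ℕ → ℝ → ℝ
  | 0, z => z
  | 1, z => -Real.log z
  | (n+2), z => Real.log (ell (n+1) z)

/-- The scale monomial `P_γ(z) = ∏_{j=0}^r ℓ_j(z)^{γ_j}` (real-exponent powers). -/
noncomputable def Pgamma (r : ℕ) (γ : ℕ → ℝ) (z : ℝ) : ℝ :=
  ∏ j ∈ Finset.range (r+1), (ell j z) ^ (γ j)

open Asymptotics Finset

theorem Asymptotics.isEquivalent_sum_of_isLittleO {α ι β : Type*} [NormedAddCommGroup β]
    [DecidableEq ι] {l : Filter α} {f : ι → α → β} {s : Finset ι} {k : ι} (hk : k ∈ s)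
    (h : ∀ j ∈ s, j ≠ k → f j =o[l] f k) :
    (fun x => ∑ j ∈ s, f j x) ~[l] f k := by
  have hsum : (fun x => ∑ j ∈ s, f j x) = f k + ∑ j ∈ s.erase k, f j := by
    ext x
    simp only [Pi.add_apply, Finset.sum_apply, add_sum_erase s (fun j => f j x) hk]
  rw [IsEquivalent, hsum, add_sub_cancel_left]
  exact IsLittleO.sum fun j hj => h j (mem_of_mem_erase hj) (ne_of_mem_erase hj)

lemma tendsto_ell_succ_atTop : ∀ n : ℕ, Tendsto (ell (n + 1)) (𝓝[>] 0) atTop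
  | 0 => tendsto_neg_atBot_atTop.comp tendsto_log_nhdsGT_zero
  | n + 1 => tendsto_log_atTop.comp (tendsto_ell_succ_atTop n)

lemma ell_succ_succ_isLittleO (n : ℕ) : ell (n + 2) =o[𝓝[>] 0] ell (n + 1) :=
  isLittleO_log_id_atTop.comp_tendsto (tendsto_ell_succ_atTop n)

lemma ell_succ_isLittleO_of_lt {i j : ℕ} (hij : i < j) :
    ell (j + 1) =o[𝓝[>] 0] ell (i + 1) := by
  induction hij with
  | refl => exact ell_succ_succ_isLittleO i
  | step _ ih => exact (ell_succ_succ_isLittleO _).trans ih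

noncomputable def logCoeff (γ : ℕ → ℝ) (j : ℕ) : ℝ := if j = 0 then -γ 0 else γ j

lemma logCoeff_eq_zero_iff {γ : ℕ → ℝ} {j : ℕ} : logCoeff γ j = 0 ↔ γ j = 0 := by
  cases j <;> simp [logCoeff]

lemma log_ell_mul (γ : ℕ → ℝ) (j : ℕ) (z : ℝ) :
    log (ell j z) * γ j = logCoeff γ j * ell (j + 1) z := by
  cases j <;> simp [ell, logCoeff] <;> ring

lemma Pgamma_eventuallyEq_exp (r : ℕ) (γ : ℕ → ℝ) :
    Pgamma r γ =ᶠ[𝓝[>] 0] fun z => exp (∑ j ∈ range (r + 1), logCoeff γ j * ell (j + 1) z) := by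
  have hpos : ∀ᶠ z in 𝓝[>] (0 : ℝ), ∀ j ∈ range (r + 1), 0 < ell j z := by
    refine (eventually_all_finset _).2 fun j _ => ?_
    cases j with
    | zero => exact self_mem_nhdsWithin
    | succ n => exact (tendsto_ell_succ_atTop n).eventually_gt_atTop 0
  filter_upwards [hpos] with z hz
  rw [Pgamma, exp_sum]
  exact prod_congr rfl fun j hj => by rw [rpow_def_of_pos (hz j hj), log_ell_mul]

lemma isEquivalent_sum_logCoeff_mul_ell {γ : ℕ → ℝ} {k r : ℕ} (hkr : k ≤ r) (hk : γ k ≠ 0)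
    (hlt : ∀ j < k, γ j = 0) :
    (fun z => ∑ j ∈ range (r + 1), logCoeff γ j * ell (j + 1) z) ~[𝓝[>] 0]
      fun z => logCoeff γ k * ell (k + 1) z := by
  have hck : logCoeff γ k ≠ 0 := logCoeff_eq_zero_iff.not.2 hk
  refine isEquivalent_sum_of_isLittleO (mem_range.2 (Nat.lt_succ_of_le hkr)) fun j _ hjk => ?_
  rcases hjk.lt_or_gt with hjk | hjk
  · simpa only [logCoeff_eq_zero_iff.2 (hlt j hjk), zero_mul] using isLittleO_zero _ _
  · exact ((ell_succ_isLittleO_of_lt hjk).const_mul_left _).const_mul_right hck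

lemma Pgamma_eq_one {r : ℕ} {γ : ℕ → ℝ} (h : ∀ j ≤ r, γ j = 0) (z : ℝ) : Pgamma r γ z = 1 :=
  prod_eq_one fun j hj => by rw [h j (Nat.lt_succ_iff.1 (mem_range.1 hj)), rpow_zero]

lemma tendsto_Pgamma_nhds_zero_or_atTop {r : ℕ} {γ : ℕ → ℝ} (h : ∃ j ≤ r, γ j ≠ 0) :
    Tendsto (Pgamma r γ) (𝓝[>] 0) (𝓝 0) ∨ Tendsto (Pgamma r γ) (𝓝[>] 0) atTop := by
  obtain ⟨hkr, hk⟩ := Nat.find_spec h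
  have hlt : ∀ j < Nat.find h, γ j = 0 := fun j hj => by
    simpa [hj.le.trans hkr] using Nat.find_min h hj
  have hequiv := (isEquivalent_sum_logCoeff_mul_ell hkr hk hlt).symm
  have hexp := (Pgamma_eventuallyEq_exp r γ).symm
  rcases lt_or_gt_of_ne (logCoeff_eq_zero_iff.not.2 hk) with hneg | hpos
  · refine .inl ((tendsto_exp_atBot.comp (hequiv.tendsto_atBot ?_)).congr' hexp)
    exact (tendsto_ell_succ_atTop _).const_mul_atTop_of_neg hneg
  · refine .inr ((tendsto_exp_atTop.comp (hequiv.tendsto_atTop ?_)).congr' hexp)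
    exact (tendsto_ell_succ_atTop _).const_mul_atTop hpos

theorem Pgamma_bounded_tendsto_general (r : ℕ) (γ : ℕ → ℝ) (d : ℝ) (hd : d ∈ Set.Ioo (0:ℝ) 1) :
    ((∃ M : ℝ, 0 < M ∧ ∀ z ∈ Set.Ioo (0:ℝ) d, Pgamma r γ z ≤ M) →
      (∃ L : ℝ, Tendsto (Pgamma r γ) (𝓝[>] (0:ℝ)) (𝓝 L)) ∧
      ((∀ j ≤ r, γ j = 0) → Tendsto (Pgamma r γ) (𝓝[>] (0:ℝ)) (𝓝 1)) ∧
      ((∃ j ≤ r, γ j ≠ 0) → Tendsto (Pgamma r γ) (𝓝[>] (0:ℝ)) (𝓝 0))) ∧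
    (∀ c : ℝ, c ≠ 0 →
      (∀ z ∈ Set.Ioo (0:ℝ) d, c * Pgamma r γ z ∈ Set.Icc (-1:ℝ) 1) →
      ∃ L : ℝ, Tendsto (Pgamma r γ) (𝓝[>] (0:ℝ)) (𝓝 L)) := by
  have hone : (∀ j ≤ r, γ j = 0) → Tendsto (Pgamma r γ) (𝓝[>] 0) (𝓝 1) := fun h =>
    tendsto_const_nhds.congr fun z => (Pgamma_eq_one h z).symm
  have hzero : (∃ M, ∀ z ∈ Set.Ioo 0 d, Pgamma r γ z ≤ M) →
      (∃ j ≤ r, γ j ≠ 0) → Tendsto (Pgamma r γ) (𝓝[>] 0) (𝓝 0) := fun ⟨_, hM⟩ h =>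
    (tendsto_Pgamma_nhds_zero_or_atTop h).resolve_right fun htop =>
      not_isBoundedUnder_of_tendsto_atTop htop
        (isBoundedUnder_of_eventually_le (eventually_of_mem (Ioo_mem_nhdsGT hd.1) hM))
  have hlim : (∃ M, ∀ z ∈ Set.Ioo 0 d, Pgamma r γ z ≤ M) →
      ∃ L, Tendsto (Pgamma r γ) (𝓝[>] 0) (𝓝 L) := fun hM => by
    by_cases h : ∃ j ≤ r, γ j ≠ 0
    · exact ⟨0, hzero hM h⟩
    · push Not at h
      exact ⟨1, hone h⟩
  refine ⟨fun ⟨M, _, hM⟩ => ⟨hlim ⟨M, hM⟩, hone, hzero ⟨M, hM⟩⟩,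
    fun c hc hcP => hlim ⟨|c|⁻¹, fun z hz => (le_abs_self _).trans ?_⟩⟩
  rw [← one_div, le_div_iff₀' (abs_pos.2 hc), ← abs_mul]
  exact abs_le.2 (hcP z hz)

/-- If `P_γ` is bounded from above on an interval `(0,d)` (with `d` small enough that
`ℓ_j > 1` on `(0,d)` for `1 ≤ j ≤ r`), then `P_γ(z)` converges to a real limit as
`z → 0+`, namely `1` if `γ = 0` and `0` otherwise. In particular, if `c ≠ 0` and
`c·P_γ(z) ∈ [-1,1]` on `(0,d)`, then the limit of `P_γ` exists in `ℝ`. -/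
theorem Pgamma_bounded_tendsto (r : ℕ) (γ : ℕ → ℝ) (d : ℝ) (hd : d ∈ Set.Ioo (0:ℝ) 1)
    (hsmall : ∀ z ∈ Set.Ioo (0:ℝ) d, ∀ j, 1 ≤ j → j ≤ r → 1 < ell j z) :
    ((∃ M : ℝ, 0 < M ∧ ∀ z ∈ Set.Ioo (0:ℝ) d, Pgamma r γ z ≤ M) →
      (∃ L : ℝ, Tendsto (Pgamma r γ) (𝓝[>] (0:ℝ)) (𝓝 L)) ∧
      ((∀ j ≤ r, γ j = 0) → Tendsto (Pgamma r γ) (𝓝[>] (0:ℝ)) (𝓝 1)) ∧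
      ((∃ j ≤ r, γ j ≠ 0) → Tendsto (Pgamma r γ) (𝓝[>] (0:ℝ)) (𝓝 0))) ∧
    (∀ c : ℝ, c ≠ 0 →
      (∀ z ∈ Set.Ioo (0:ℝ) d, c * Pgamma r γ z ∈ Set.Icc (-1:ℝ) 1) →
      ∃ L : ℝ, Tendsto (Pgamma r γ) (𝓝[>] (0:ℝ)) (𝓝 L)) :=
  Pgamma_bounded_tendsto_general r γ d hd
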